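/- Let (A,B) ∈ ℂ^{n×n} be a proper Hessenberg pair with finite poles ξ_1,…,ξ_{n−1} ∈ ℂ, none of which is an eigenvalue of the pencil. Then for every k with 1 ≤ k ≤ n, the rational Krylov subspace K_k^rat(A, B, e_1, (ξ_1,…,ξ_{k−1})) equals E_k, the span of the first k standard basis vectors e_1,…,e_k. -/
import Mathlib

open Matrix

/-- A matrix is upper Hessenberg if all entries below the first subdiagonal vanish. -/
def UpperHessenberg {n : ℕ} (A : Matrix (Fin n) (Fin n) ℂ) : Prop :=
  ∀ i j : Fin n, (j : ℕ) + 1 < (i : ℕ) → A i j = 0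

/-- A proper Hessenberg pair: both matrices upper Hessenberg, no subdiagonal position with
both entries zero, linearly independent first columns and linearly independent last rows. -/
def ProperHessPair {n : ℕ} (A B : Matrix (Fin (n + 1)) (Fin (n + 1)) ℂ) : Prop :=
  UpperHessenberg A ∧ UpperHessenberg B ∧
    (∀ i j : Fin (n + 1), (i : ℕ) = (j : ℕ) + 1 → ¬(A i j = 0 ∧ B i j = 0)) ∧
    LinearIndependent ℂ ![fun i => A i 0, fun i => B i 0] ∧
    LinearIndependent ℂ ![fun j => A (Fin.last n) j, fun j => B (Fin.last n) j]

/-- The elementary rational function M(ϱ,ξ) = (A − ϱB)(A − ξB)⁻¹. -/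
noncomputable def Mfun {n : ℕ} (A B : Matrix (Fin n) (Fin n) ℂ) (ϱ ξ : ℂ) :
    Matrix (Fin n) (Fin n) ℂ :=
  (A - ϱ • B) * (A - ξ • B)⁻¹

/-- The ordered product ∏_{i=1}^{j} M(ϱᵢ, ξᵢ) of elementary rational functions. -/
noncomputable def prodM {n : ℕ} (A B : Matrix (Fin n) (Fin n) ℂ) (ϱ ξ : ℕ → ℂ)
    (j : ℕ) : Matrix (Fin n) (Fin n) ℂ :=
  ((List.range j).map fun i => Mfun A B (ϱ i) (ξ i)).prod

lemma resolvent_symm {n : ℕ} (A B : Matrix (Fin n) (Fin n) ℂ) (ξ ξ' : ℂ)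
    (h : IsUnit (A - ξ • B)) (h' : IsUnit (A - ξ' • B)) :
    (A - ξ • B)⁻¹ * B * (A - ξ' • B)⁻¹ = (A - ξ' • B)⁻¹ * B * (A - ξ • B)⁻¹ := by
  set C := A - ξ • B with hC
  set C' := A - ξ' • B with hC'
  have hd : IsUnit C.det := (Matrix.isUnit_iff_isUnit_det C).mp h
  have hd' : IsUnit C'.det := (Matrix.isUnit_iff_isUnit_det C').mp h'
  by_cases hξ : ξ = ξ'
  · rw [hC, hC', hξ]
  · have key : ∀ (D D' : Matrix (Fin n) (Fin n) ℂ) (a b : ℂ), D = A - a • B → D' = A - b • B →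
        IsUnit D.det → IsUnit D'.det →
        D⁻¹ - D'⁻¹ = (a - b) • (D⁻¹ * B * D'⁻¹) := by
      intro D D' a b hD hD' hu hu'
      have h1 : D⁻¹ - D'⁻¹ = D⁻¹ * (D' - D) * D'⁻¹ := by
        rw [mul_sub, sub_mul, Matrix.nonsing_inv_mul _ hu, Matrix.one_mul, mul_assoc,
          Matrix.mul_nonsing_inv _ hu', Matrix.mul_one]
      rw [h1, hD, hD']
      have h2 : (A - b • B) - (A - a • B) = (a - b) • B := by
        rw [sub_smul]; abel
      rw [h2, Matrix.mul_smul, Matrix.smul_mul]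
    have e1 := key C C' ξ ξ' hC hC' hd hd'
    have e2 := key C' C ξ' ξ hC' hC hd' hd
    have e3 : (ξ - ξ') • (C⁻¹ * B * C'⁻¹) = (ξ - ξ') • (C'⁻¹ * B * C⁻¹) := by
      rw [← e1]
      have h4 : (ξ - ξ') • (C'⁻¹ * B * C⁻¹) = -((ξ' - ξ) • (C'⁻¹ * B * C⁻¹)) := by
        rw [← neg_smul, neg_sub]
      rw [h4, ← e2]; abel
    exact smul_right_injective _ (sub_ne_zero.mpr hξ) e3

lemma Mfun_eq {n : ℕ} (A B : Matrix (Fin n) (Fin n) ℂ) (ϱ ξ : ℂ)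
    (h : IsUnit (A - ξ • B)) :
    Mfun A B ϱ ξ = 1 + (ξ - ϱ) • (B * (A - ξ • B)⁻¹) := by
  have hd : IsUnit (A - ξ • B).det := (Matrix.isUnit_iff_isUnit_det _).mp h
  have h1 : A - ϱ • B = (A - ξ • B) + (ξ - ϱ) • B := by
    rw [sub_smul]; abel
  rw [Mfun, h1, Matrix.add_mul, Matrix.mul_nonsing_inv _ hd, Matrix.smul_mul]

set_option maxHeartbeats 1000000 in
lemma Mfun_comm {n : ℕ} (A B : Matrix (Fin n) (Fin n) ℂ) (ϱ ϱ' ξ ξ' : ℂ)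
    (h : IsUnit (A - ξ • B)) (h' : IsUnit (A - ξ' • B)) :
    Commute (Mfun A B ϱ ξ) (Mfun A B ϱ' ξ') := by
  rw [Mfun_eq A B ϱ ξ h, Mfun_eq A B ϱ' ξ' h']
  have hP : Commute (B * (A - ξ • B)⁻¹) (B * (A - ξ' • B)⁻¹) := by
    show _ * _ = _ * _
    calc B * (A - ξ • B)⁻¹ * (B * (A - ξ' • B)⁻¹)
        = B * ((A - ξ • B)⁻¹ * B * (A - ξ' • B)⁻¹) := by
          simp only [mul_assoc]
      _ = B * ((A - ξ' • B)⁻¹ * B * (A - ξ • B)⁻¹) := by rw [resolvent_symm A B ξ ξ' h h']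
      _ = B * (A - ξ' • B)⁻¹ * (B * (A - ξ • B)⁻¹) := by
          simp only [mul_assoc]
  set P := B * (A - ξ • B)⁻¹
  set Q := B * (A - ξ' • B)⁻¹
  show _ * _ = _ * _
  have hPQ : P * Q = Q * P := hP
  simp only [mul_add, add_mul, one_mul, mul_one, Matrix.smul_mul, Matrix.mul_smul,
    smul_smul, hPQ, mul_comm (ξ - ϱ) (ξ' - ϱ')]
  abel

lemma prodM_succ {n : ℕ} (A B : Matrix (Fin n) (Fin n) ℂ) (ϱ ξ : ℕ → ℂ) (j : ℕ)
    (hu : ∀ i, i ≤ j → IsUnit (A - ξ i • B)) :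
    prodM A B ϱ ξ (j+1) = Mfun A B (ϱ j) (ξ j) * prodM A B ϱ ξ j := by
  unfold prodM
  rw [List.range_succ, List.map_append, List.prod_append]
  simp only [List.map_cons, List.map_nil, List.prod_cons, List.prod_nil, mul_one]
  refine (Commute.list_prod_right _ _ ?_).symm
  intro y hy
  obtain ⟨i, hi, rfl⟩ := List.mem_map.mp hy
  exact Mfun_comm A B (ϱ j) (ϱ i) (ξ j) (ξ i) (hu j le_rfl)
    (hu i (le_of_lt (List.mem_range.mp hi)))

/-- Membership in E_m: all coordinates with index ≥ m vanish. -/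
def Ep {N : ℕ} (m : ℕ) (v : Fin N → ℂ) : Prop := ∀ i : Fin N, m ≤ (i : ℕ) → v i = 0

lemma mulVec_apply {N : ℕ} (C : Matrix (Fin N) (Fin N) ℂ) (v : Fin N → ℂ) (i : Fin N) :
    C.mulVec v i = ∑ l, C i l * v l := rfl

lemma Ep_hess {N : ℕ} {C : Matrix (Fin N) (Fin N) ℂ} (hC : UpperHessenberg C)
    {m : ℕ} {v : Fin N → ℂ} (hv : Ep m v) : Ep (m+1) (C.mulVec v) := by
  intro i hi
  rw [mulVec_apply]
  apply Finset.sum_eq_zero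
  intro l _
  rcases le_or_gt m (l : ℕ) with hl | hl
  · rw [hv l hl, mul_zero]
  · rw [hC i l (by omega), zero_mul]

/-- C = A - ξ_j • B preserves E_{j+1} when its (j+1, j) entry vanishes. -/
lemma Ep_pole {N : ℕ} {C : Matrix (Fin N) (Fin N) ℂ} (hC : UpperHessenberg C)
    {m : ℕ} (hm : m + 1 < N)
    (hz : C ⟨m+1, hm⟩ ⟨m, by omega⟩ = 0)
    {v : Fin N → ℂ} (hv : Ep (m+1) v) : Ep (m+1) (C.mulVec v) := by
  intro i hi
  rw [mulVec_apply]
  apply Finset.sum_eq_zero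
  intro l _
  rcases le_or_gt (m+1) (l : ℕ) with hl | hl
  · rw [hv l hl, mul_zero]
  · rcases Nat.lt_or_ge (l : ℕ) m with hl2 | hl2
    · rw [hC i l (by omega), zero_mul]
    · -- l.val = m
      have hlm : (l : ℕ) = m := by omega
      rcases Nat.lt_or_ge (m+1) (i : ℕ) with hi2 | hi2
      · rw [hC i l (by omega), zero_mul]
      · have : i = (⟨m+1, hm⟩ : Fin N) := Fin.ext (show (i:ℕ) = m+1 by omega)
        have hl3 : l = (⟨m, by omega⟩ : Fin N) := Fin.ext (show (l:ℕ) = m by omega)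
        rw [this, hl3, hz, zero_mul]

/-- If C is invertible and preserves E_m, then C⁻¹ preserves E_m. -/
lemma Ep_inv {N : ℕ} {C : Matrix (Fin N) (Fin N) ℂ} (hC : IsUnit C) {m : ℕ}
    (hpres : ∀ w : Fin N → ℂ, Ep m w → Ep m (C.mulVec w))
    {v : Fin N → ℂ} (hv : Ep m v) : Ep m (C⁻¹.mulVec v) := by
  have hd : IsUnit C.det := (Matrix.isUnit_iff_isUnit_det C).mp hC
  set E : Submodule ℂ (Fin N → ℂ) :=
    { carrier := {w | Ep m w}
      add_mem' := fun ha hb i hi => by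
        simp only [Set.mem_setOf_eq] at *
        rw [Pi.add_apply, ha i hi, hb i hi, add_zero]
      zero_mem' := fun i _ => rfl
      smul_mem' := fun c w hw i hi => by
        simp only [Set.mem_setOf_eq] at *
        rw [Pi.smul_apply, hw i hi, smul_zero] } with hE
  have hmem : ∀ w : Fin N → ℂ, w ∈ E ↔ Ep m w := fun w => Iff.rfl
  have hmap : ∀ x ∈ E, C.mulVecLin x ∈ E := fun x hx => hpres x hx
  set f : E →ₗ[ℂ] E := (C.mulVecLin.restrict hmap) with hf
  have hinj : Function.Injective f := by
    intro a b hab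
    have h1 : C.mulVec a.1 = C.mulVec b.1 := congrArg Subtype.val hab
    have h2 : C⁻¹.mulVec (C.mulVec a.1) = C⁻¹.mulVec (C.mulVec b.1) := by rw [h1]
    simp only [Matrix.mulVec_mulVec, Matrix.nonsing_inv_mul _ hd,
      Matrix.one_mulVec] at h2
    exact Subtype.ext h2
  have hsurj : Function.Surjective f := (LinearMap.injective_iff_surjective).mp hinj
  obtain ⟨w, hw⟩ := hsurj ⟨v, hv⟩
  have h1 : C.mulVec w.1 = v := congrArg Subtype.val hw
  have h2 : C⁻¹.mulVec v = w.1 := by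
    rw [← h1, Matrix.mulVec_mulVec, Matrix.nonsing_inv_mul _ hd, Matrix.one_mulVec]
  rw [h2]; exact w.2

lemma Ep_mono {N : ℕ} {m m' : ℕ} (h : m ≤ m') {v : Fin N → ℂ} (hv : Ep m v) : Ep m' v :=
  fun i hi => hv i (le_trans h hi)

lemma Ep_smul {N : ℕ} {m : ℕ} (c : ℂ) {v : Fin N → ℂ} (hv : Ep m v) : Ep m (c • v) :=
  fun i hi => by rw [Pi.smul_apply, hv i hi, smul_zero]

lemma Ep_add {N : ℕ} {m : ℕ} {v w : Fin N → ℂ} (hv : Ep m v) (hw : Ep m w) : Ep m (v + w) :=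
  fun i hi => by rw [Pi.add_apply, hv i hi, hw i hi, add_zero]

lemma Ep_sub {N : ℕ} {m : ℕ} {v w : Fin N → ℂ} (hv : Ep m v) (hw : Ep m w) : Ep m (v - w) :=
  fun i hi => by rw [Pi.sub_apply, hv i hi, hw i hi, sub_zero]

lemma mulVec_apply' {N : ℕ} (C : Matrix (Fin N) (Fin N) ℂ) (v : Fin N → ℂ) (i : Fin N) :
    C.mulVec v i = ∑ l, C i l * v l := rfl

lemma row_apply {N : ℕ} {C : Matrix (Fin N) (Fin N) ℂ} (hC : UpperHessenberg C)
    {m : ℕ} (hm : m + 1 < N) {v : Fin N → ℂ} (hv : Ep (m+1) v) :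
    C.mulVec v ⟨m+1, hm⟩ = C ⟨m+1, hm⟩ ⟨m, by omega⟩ * v ⟨m, by omega⟩ := by
  rw [mulVec_apply']
  apply Finset.sum_eq_single (⟨m, by omega⟩ : Fin N)
  · intro l _ hl
    rcases Nat.lt_or_ge (l : ℕ) m with h1 | h1
    · rw [hC _ l (by simp; omega), zero_mul]
    · rcases Nat.lt_or_ge (l : ℕ) (m+1) with h2 | h2
      · exact absurd (Fin.ext (show (l:ℕ) = m by omega)) hl
      · rw [hv l h2, mul_zero]
  · intro hmem; exact absurd (Finset.mem_univ _) hmem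

lemma single_decomp {N : ℕ} (v : Fin N → ℂ) :
    v = ∑ m : Fin N, v m • (Pi.single m 1 : Fin N → ℂ) := by
  have h1 : ∀ m : Fin N, v m • (Pi.single m 1 : Fin N → ℂ) = Pi.single m (v m) := by
    intro m
    rw [← Pi.single_smul, smul_eq_mul, mul_one]
  rw [Finset.sum_congr rfl (fun m _ => h1 m), Finset.univ_sum_single]

lemma triangular_span {n k : ℕ} (hk : k ≤ n + 1) (z : Fin k → Fin (n+1) → ℂ)
    (hsupp : ∀ j : Fin k, Ep ((j:ℕ)+1) (z j))
    (hpiv : ∀ j : Fin k, z j (Fin.castLE hk j) ≠ 0) :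
    Submodule.span ℂ (Set.range z) =
      Submodule.span ℂ (Set.range fun j : Fin k =>
        (Pi.single (Fin.castLE hk j) 1 : Fin (n+1) → ℂ)) := by
  apply le_antisymm
  · rw [Submodule.span_le]
    rintro _ ⟨j, rfl⟩
    rw [single_decomp (z j)]
    apply Submodule.sum_mem
    intro m _
    rcases Nat.lt_or_ge (m : ℕ) k with hm | hm
    · apply Submodule.smul_mem
      apply Submodule.subset_span
      refine ⟨⟨(m:ℕ), hm⟩, ?_⟩
      show (Pi.single (Fin.castLE hk ⟨(m:ℕ), hm⟩) 1 : Fin (n+1) → ℂ) = Pi.single m 1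
      have : Fin.castLE hk ⟨(m:ℕ), hm⟩ = m := Fin.ext (by simp)
      rw [this]
    · have : z j m = 0 := hsupp j m (by omega)
      rw [this, zero_smul]
      exact Submodule.zero_mem _
  · rw [Submodule.span_le]
    rintro _ ⟨j, rfl⟩
    simp only [SetLike.mem_coe]
    have key : ∀ N : ℕ, ∀ j : Fin k, (j:ℕ) < N →
        (Pi.single (Fin.castLE hk j) 1 : Fin (n+1) → ℂ) ∈ Submodule.span ℂ (Set.range z) := by
      intro N
      induction N with
      | zero => intro j hj; omega
      | succ N ih =>
        intro j hj
        rcases Nat.lt_or_ge (j:ℕ) N with hlt | hge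
        · exact ih j hlt
        have hc := hpiv j
        set c := z j (Fin.castLE hk j) with hcdef
        set S := ∑ m ∈ Finset.univ.erase (Fin.castLE hk j),
            z j m • (Pi.single m 1 : Fin (n+1) → ℂ) with hS
        have hsum : z j = c • (Pi.single (Fin.castLE hk j) 1 : Fin (n+1) → ℂ) + S := by
          conv_lhs => rw [single_decomp (z j)]
          rw [hS]
          exact (Finset.add_sum_erase _
            (fun m => z j m • (Pi.single m 1 : Fin (n+1) → ℂ)) (Finset.mem_univ _)).symm
        have hrepr : (Pi.single (Fin.castLE hk j) 1 : Fin (n+1) → ℂ) = c⁻¹ • (z j - S) := by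
          rw [hsum, add_sub_cancel_right, smul_smul, inv_mul_cancel₀ hc, one_smul]
        rw [hrepr]
        apply Submodule.smul_mem
        apply Submodule.sub_mem
        · exact Submodule.subset_span ⟨j, rfl⟩
        apply Submodule.sum_mem
        intro m hm
        have hmne : m ≠ Fin.castLE hk j := Finset.ne_of_mem_erase hm
        rcases Nat.lt_or_ge ((j:ℕ)) ((m:ℕ)) with h1 | h1
        · rw [hsupp j m (by omega), zero_smul]
          exact Submodule.zero_mem _
        · have hne : (m:ℕ) ≠ (j:ℕ) := by
            intro hcon
            exact hmne (Fin.ext (by simp [hcon]))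
          have hmlt : (m:ℕ) < (j:ℕ) := by omega
          have hj' : (m:ℕ) < k := by omega
          have := ih ⟨(m:ℕ), hj'⟩ (by simp; omega)
          apply Submodule.smul_mem
          have hceq : Fin.castLE hk ⟨(m:ℕ), hj'⟩ = m := Fin.ext (by simp)
          rwa [hceq] at this
    exact key k j j.isLt

/-- For a proper Hessenberg pair of size (n+1) with finite poles ξ₁,…,ξₙ, none of which is
an eigenvalue, the rational Krylov subspace K_k^rat(A, B, e₁, (ξ₁,…,ξ_{k−1})) equals 𝓔_k,
the span of the first k standard basis vectors, for every 1 ≤ k ≤ n+1. -/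
theorem rational_krylov_eq_canonical {n : ℕ}
    (A B : Matrix (Fin (n + 1)) (Fin (n + 1)) ℂ)
    (h : ProperHessPair A B)
    (ξ : ℕ → ℂ)
    (hpoles : ∀ i : Fin n, B i.succ i.castSucc ≠ 0 ∧
      A i.succ i.castSucc = ξ (i : ℕ) * B i.succ i.castSucc)
    (heig : ∀ i, i < n → IsUnit (A - ξ i • B))
    (ϱ : ℕ → ℂ) (hshift : ∀ i j, i < n → j < n → ϱ i ≠ ξ j)
    (k : ℕ) (hk1 : 1 ≤ k) (hk : k ≤ n + 1) :
    Submodule.span ℂ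
        (Set.range fun j : Fin k => (prodM A B ϱ ξ (j : ℕ)).mulVec (Pi.single 0 1)) =
      Submodule.span ℂ
        (Set.range fun j : Fin k =>
          (Pi.single (Fin.castLE hk j) 1 : Fin (n + 1) → ℂ)) := by
  obtain ⟨hA, hB, -, -, -⟩ := h
  -- the Krylov vectors
  set z : ℕ → (Fin (n+1) → ℂ) := fun j => (prodM A B ϱ ξ j).mulVec (Pi.single 0 1) with hzdef
  -- basic facts
  have hhess : ∀ μ : ℂ, UpperHessenberg (A - μ • B) := by
    intro μ i l hil
    rw [Matrix.sub_apply, Matrix.smul_apply, hA i l hil, hB i l hil, smul_zero, sub_zero]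
  have hz0 : z 0 = Pi.single 0 1 := by
    rw [hzdef]
    simp only [prodM, List.range_zero, List.map_nil, List.prod_nil, Matrix.one_mulVec]
  have hrec : ∀ j, j < n → z (j+1) = (Mfun A B (ϱ j) (ξ j)).mulVec (z j) := by
    intro j hj
    rw [hzdef]
    simp only
    rw [prodM_succ A B ϱ ξ j (fun i hi => heig i (by omega)), ← Matrix.mulVec_mulVec]
  -- entries
  have hBne : ∀ m (hm : m < n), B ⟨m+1, by omega⟩ ⟨m, by omega⟩ ≠ 0 := by
    intro m hm
    have := (hpoles ⟨m, hm⟩).1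
    have he1 : (⟨m, hm⟩ : Fin n).succ = (⟨m+1, by omega⟩ : Fin (n+1)) := Fin.ext (by simp)
    have he2 : (⟨m, hm⟩ : Fin n).castSucc = (⟨m, by omega⟩ : Fin (n+1)) := Fin.ext (by simp)
    rwa [he1, he2] at this
  have hAB : ∀ m (hm : m < n), A ⟨m+1, by omega⟩ ⟨m, by omega⟩ =
      ξ m * B ⟨m+1, by omega⟩ ⟨m, by omega⟩ := by
    intro m hm
    have := (hpoles ⟨m, hm⟩).2
    have he1 : (⟨m, hm⟩ : Fin n).succ = (⟨m+1, by omega⟩ : Fin (n+1)) := Fin.ext (by simp)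
    have he2 : (⟨m, hm⟩ : Fin n).castSucc = (⟨m, by omega⟩ : Fin (n+1)) := Fin.ext (by simp)
    rwa [he1, he2] at this
  have hsubdiag : ∀ (μ : ℂ) m (hm : m < n),
      (A - μ • B) ⟨m+1, by omega⟩ ⟨m, by omega⟩ = (ξ m - μ) * B ⟨m+1, by omega⟩ ⟨m, by omega⟩ := by
    intro μ m hm
    rw [Matrix.sub_apply, Matrix.smul_apply, hAB m hm, smul_eq_mul]
    ring
  -- the main induction
  have main : ∀ j, j + 1 ≤ k →
      Ep (j+1) (z j) ∧
      (∀ i : Fin (n+1), (i:ℕ) = j → z j i ≠ 0) ∧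
      (∀ α β : ℂ, (α ≠ 0 ∨ β ≠ 0) → (∀ i, i < j → β + α * ϱ i ≠ 0) →
        ∀ x : Fin (n+1) → ℂ, Ep j x → z j ≠ (α • A + β • B).mulVec x) := by
    intro j
    induction j with
    | zero =>
      intro _
      refine ⟨?_, ?_, ?_⟩
      · intro i hi
        rw [hz0]
        exact Pi.single_eq_of_ne (fun hcon => by simp [hcon] at hi) 1
      · intro i hi
        have : i = 0 := Fin.ext (by simpa using hi)
        rw [this, hz0, Pi.single_eq_same]
        exact one_ne_zero
      · intro α β _ _ x hx hEq
        have hx0 : x = 0 := funext fun i => hx i (Nat.zero_le _)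
        rw [hx0, Matrix.mulVec_zero, hz0] at hEq
        have := congrFun hEq 0
        rw [Pi.single_eq_same, Pi.zero_apply] at this
        exact one_ne_zero this
    | succ j ih =>
      intro hjk
      have hjn : j < n := by omega
      obtain ⟨hsupp_j, hpiv_j, hinv_j⟩ := ih (by omega)
      -- the pole matrix
      set C : Matrix (Fin (n+1)) (Fin (n+1)) ℂ := A - ξ j • B with hCdef
      have hCu : IsUnit C := heig j hjn
      have hdet : IsUnit C.det := (Matrix.isUnit_iff_isUnit_det C).mp hCu
      have hCz : C ⟨j+1, by omega⟩ ⟨j, by omega⟩ = 0 := by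
        rw [hCdef, hsubdiag (ξ j) j hjn, sub_self, zero_mul]
      have hpole_pres : ∀ w : Fin (n+1) → ℂ, Ep (j+1) w → Ep (j+1) (C.mulVec w) :=
        fun w hw => Ep_pole (hhess (ξ j)) (by omega) hCz hw
      set y : Fin (n+1) → ℂ := C⁻¹.mulVec (z j) with hydef
      have hy_supp : Ep (j+1) y := Ep_inv hCu hpole_pres hsupp_j
      have hzy : z j = C.mulVec y := by
        rw [hydef, Matrix.mulVec_mulVec, Matrix.mul_nonsing_inv _ hdet, Matrix.one_mulVec]
      have hzyAB : z j = A.mulVec y - ξ j • B.mulVec y := by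
        rw [hzy, hCdef, Matrix.sub_mulVec, Matrix.smul_mulVec]
      -- the pole-direction invariant condition
      have hpolecond : ∀ i, i < j → -ξ j + 1 * ϱ i ≠ 0 := by
        intro i hi hcon
        exact hshift i j (by omega) hjn (by linear_combination hcon)
      have hCform : C = (1:ℂ) • A + (-ξ j) • B := by
        rw [hCdef, one_smul, neg_smul, ← sub_eq_add_neg]
      -- pivot of y
      have hy_piv : ∀ i : Fin (n+1), (i:ℕ) = j → y i ≠ 0 := by
        intro i hi hcon
        have hyE : Ep j y := by
          intro l hl
          rcases Nat.lt_or_ge (l : ℕ) (j+1) with h1 | h1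
          · have : l = i := Fin.ext (by omega)
            rwa [this]
          · exact hy_supp l h1
        exact hinv_j 1 (-ξ j) (Or.inl one_ne_zero) hpolecond y hyE (by rw [← hCform, hzy])
      -- the recurrence
      have hMu : IsUnit (A - ξ j • B) := heig j hjn
      have hrecj : z (j+1) = (A - ϱ j • B).mulVec y := by
        rw [hrec j hjn, Mfun, ← Matrix.mulVec_mulVec, ← hCdef, ← hydef]
      refine ⟨?_, ?_, ?_⟩
      · -- support
        rw [hrecj]
        exact Ep_hess (hhess (ϱ j)) hy_supp
      · -- pivot
        intro i hi
        have hieq : i = (⟨j+1, by omega⟩ : Fin (n+1)) := Fin.ext (show (i:ℕ) = j+1 from hi)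
        rw [hrecj, hieq, row_apply (hhess (ϱ j)) (by omega) hy_supp, hsubdiag (ϱ j) j hjn]
        exact mul_ne_zero (mul_ne_zero (sub_ne_zero_of_ne
          (fun hcon => hshift j j hjn hjn hcon.symm)) (hBne j hjn)) (hy_piv _ rfl)
      · -- invariant
        intro α β hαβ hϱs x hx hEq
        rw [hrecj] at hEq
        have hxy : A.mulVec y - ϱ j • B.mulVec y = α • A.mulVec x + β • B.mulVec x := by
          have h0 := hEq
          rw [Matrix.sub_mulVec, Matrix.smul_mulVec, Matrix.add_mulVec,
            Matrix.smul_mulVec, Matrix.smul_mulVec] at h0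
          exact h0
        set u : Fin (n+1) → ℂ := y - α • x with hudef
        set w : Fin (n+1) → ℂ := ϱ j • y + β • x with hwdef
        have hu_supp : Ep (j+1) u := Ep_sub hy_supp (Ep_smul α (Ep_mono (by omega) hx))
        have hw_supp : Ep (j+1) w := Ep_add (Ep_smul _ hy_supp) (Ep_smul β (Ep_mono (by omega) hx))
        have hAu : A.mulVec u = B.mulVec w := by
          rw [hudef, hwdef, Matrix.mulVec_sub, Matrix.mulVec_add, Matrix.mulVec_smul,
            Matrix.mulVec_smul, Matrix.mulVec_smul]
          linear_combination (norm := module) hxy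
        -- coordinate j+1
        have hrowA := row_apply hA (show j+1 < n+1 by omega) hu_supp
        have hrowB := row_apply hB (show j+1 < n+1 by omega) hw_supp
        have hcoord : w ⟨j, by omega⟩ = ξ j * u ⟨j, by omega⟩ := by
          have h1 : A.mulVec u ⟨j+1, by omega⟩ = B.mulVec w ⟨j+1, by omega⟩ := by rw [hAu]
          rw [hrowA, hrowB, hAB j hjn] at h1
          have h2 : B ⟨j+1, by omega⟩ ⟨j, by omega⟩ * (ξ j * u ⟨j, by omega⟩) =
              B ⟨j+1, by omega⟩ ⟨j, by omega⟩ * w ⟨j, by omega⟩ := by linear_combination h1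
          exact (mul_left_cancel₀ (hBne j hjn) h2).symm
        set t : Fin (n+1) → ℂ := w - ξ j • u with htdef
        have ht_supp : Ep j t := by
          intro l hl
          rcases Nat.lt_or_ge (l : ℕ) (j+1) with h1 | h1
          · have hlj : l = (⟨j, by omega⟩ : Fin (n+1)) := Fin.ext (show (l:ℕ) = j by omega)
            rw [htdef, Pi.sub_apply, Pi.smul_apply, hlj, hcoord, smul_eq_mul, sub_self]
          · rw [htdef, Pi.sub_apply, Pi.smul_apply, hw_supp l h1, hu_supp l h1,
              smul_zero, sub_zero]
        have htv : t = (ϱ j - ξ j) • y + (β + α * ξ j) • x := by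
          rw [htdef, hwdef, hudef]
          module
        by_cases hcase : β + α * ξ j = 0
        · -- y ∈ E_j, contradiction with invariant at (1, -ξ j)
          have hyt : y = (ϱ j - ξ j)⁻¹ • t := by
            rw [htv, hcase, zero_smul, add_zero, smul_smul,
              inv_mul_cancel₀ (sub_ne_zero_of_ne (fun hcon => hshift j j hjn hjn hcon)),
              one_smul]
          have hyE : Ep j y := by rw [hyt]; exact Ep_smul _ ht_supp
          exact hinv_j 1 (-ξ j) (Or.inl one_ne_zero) hpolecond y hyE (by rw [← hCform, hzy])
        · -- z j ∈ (αA+βB) E_j, contradiction with invariant at (α, β)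
          have hϱj : β + α * ϱ j ≠ 0 := hϱs j (by omega)
          have htE : (α • A + β • B).mulVec t =
              (ϱ j - ξ j) • (α • A.mulVec y + β • B.mulVec y) +
              (β + α * ξ j) • (A.mulVec y - ϱ j • B.mulVec y) := by
            have hyexp : (α • A + β • B).mulVec y = α • A.mulVec y + β • B.mulVec y := by
              rw [Matrix.add_mulVec, Matrix.smul_mulVec, Matrix.smul_mulVec]
            have hxexp : (α • A + β • B).mulVec x = α • A.mulVec x + β • B.mulVec x := by
              rw [Matrix.add_mulVec, Matrix.smul_mulVec, Matrix.smul_mulVec]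
            rw [htv, Matrix.mulVec_add, Matrix.mulVec_smul, Matrix.mulVec_smul, hyexp,
              hxexp, ← hxy]
          have hkey : z j = (α • A + β • B).mulVec ((β + α * ϱ j)⁻¹ • t) := by
            rw [Matrix.mulVec_smul, htE, hzyAB]
            match_scalars
            · field_simp
              ring
            · field_simp
              ring
          exact hinv_j α β hαβ (fun i hi => hϱs i (by omega)) _ (Ep_smul _ ht_supp) hkey
  -- conclude via the triangular span lemma
  have hfin := triangular_span hk (fun j : Fin k => z (j : ℕ))
    (fun j => (main (j : ℕ) j.isLt).1)
    (fun j => (main (j : ℕ) j.isLt).2.1 (Fin.castLE hk j) rfl)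
  exact hfin
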